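/- Let (x_j)_{j=1}^{n+1} be a full spark family of unit vectors in ℝ^n and let λ_c be the infimum of all λ>0 such that (x_j)_{j=1}^{n+1} does λ-saturation recovery on the closed unit ball of ℝ^n. Then λ_c ≥ 2^{−1/2}(1+1/n)^{1/2}, and equality holds if and only if (x_j)_{j=1}^{n+1} is equiangular, i.e., |⟨x_i,x_j⟩| = 1/n for all i≠j. -/
import Mathlib


local notation "⟪" x ", " y "⟫" => @inner ℝ _ _ x y

/-- The saturation function `φ_λ`: `φ_λ(t) = t` if `|t| ≤ λ` and `φ_λ(t) = sign(t)·λ` else. -/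
noncomputable def satur (l t : ℝ) : ℝ := max (-l) (min l t)

lemma satur_of_abs_le' {l t : ℝ} (h : |t| ≤ l) : satur l t = t := by
  unfold satur
  rw [abs_le] at h
  rw [min_eq_right h.2, max_eq_right h.1]

lemma satur_of_le' {l t : ℝ} (h0 : 0 ≤ l) (h : l ≤ t) : satur l t = l := by
  unfold satur; rw [min_eq_left h, max_eq_right (by linarith)]

lemma satur_of_le_neg' {l t : ℝ} (h0 : 0 ≤ l) (h : t ≤ -l) : satur l t = -l := by
  unfold satur; rw [min_eq_right (by linarith), max_eq_left h]

lemma satur_cases' {l s t : ℝ} (hl : 0 < l) (h : satur l s = satur l t) (hne : s ≠ t) :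
    (l ≤ s ∧ l ≤ t) ∨ (s ≤ -l ∧ t ≤ -l) := by
  rcases le_or_gt l s with hs | hs
  · left
    refine ⟨hs, ?_⟩
    rw [satur_of_le' hl.le hs] at h
    by_contra ht
    push_neg at ht
    rcases le_or_gt (-l) t with h2 | h2
    · rw [satur_of_abs_le' (abs_le.mpr ⟨h2, ht.le⟩)] at h; linarith
    · rw [satur_of_le_neg' hl.le h2.le] at h; linarith
  rcases le_or_gt s (-l) with hs2 | hs2
  · right
    refine ⟨hs2, ?_⟩
    rw [satur_of_le_neg' hl.le hs2] at h
    by_contra ht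
    push_neg at ht
    rcases le_or_gt l t with h2 | h2
    · rw [satur_of_le' hl.le h2] at h; linarith
    · rw [satur_of_abs_le' (abs_le.mpr ⟨ht.le, h2.le⟩)] at h; linarith
  · exfalso
    rw [satur_of_abs_le' (abs_le.mpr ⟨hs2.le, hs.le⟩)] at h
    rcases le_or_gt l t with h2 | h2
    · rw [satur_of_le' hl.le h2] at h; linarith
    rcases le_or_gt t (-l) with h3 | h3
    · rw [satur_of_le_neg' hl.le h3] at h; linarith
    · rw [satur_of_abs_le' (abs_le.mpr ⟨h3.le, h2.le⟩)] at h; exact hne h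

lemma satur_eq_of_sign {l s t ε : ℝ} (h0 : 0 ≤ l) (hε : ε = 1 ∨ ε = -1)
    (hs : l ≤ ε * s) (ht : l ≤ ε * t) : satur l s = satur l t := by
  rcases hε with rfl | rfl
  · rw [one_mul] at hs ht; rw [satur_of_le' h0 hs, satur_of_le' h0 ht]
  · rw [satur_of_le_neg' h0 (by linarith), satur_of_le_neg' h0 (by linarith)]

section helpers
variable {n : ℕ} (xv : Fin (n + 1) → EuclideanSpace ℝ (Fin n))
  (hfs : ∀ s : Finset (Fin (n + 1)), s.card = n →
      LinearIndependent ℝ (fun j : {j // j ∈ s} => xv j.1))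

include hfs in
/-- orthogonality to an n-subfamily forces zero -/
lemma perp_zero (s : Finset (Fin (n + 1))) (hcard : s.card = n)
    (z : EuclideanSpace ℝ (Fin n)) (hz : ∀ j ∈ s, ⟪xv j, z⟫ = 0) : z = 0 := by
  have hli := hfs s hcard
  have hcard' : Fintype.card {j // j ∈ s} = Module.finrank ℝ (EuclideanSpace ℝ (Fin n)) := by
    simp [hcard]
  have hspan := hli.span_eq_top_of_card_eq_finrank' hcard'
  have hle : Submodule.span ℝ (Set.range fun j : {j // j ∈ s} => xv j.1) ≤ (ℝ ∙ z)ᗮ := by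
    rw [Submodule.span_le]
    rintro _ ⟨j, rfl⟩
    rw [SetLike.mem_coe, Submodule.mem_orthogonal_singleton_iff_inner_right]
    rw [real_inner_comm]
    exact hz j.1 j.2
  rw [hspan] at hle
  have hzz : ⟪z, z⟫ = 0 := by
    have := hle (Submodule.mem_top (x := z))
    rw [Submodule.mem_orthogonal_singleton_iff_inner_right] at this
    exact this
  exact inner_self_eq_zero.mp hzz

include hfs in
/-- a linear dependence with all coefficients nonzero -/
lemma exists_dep : ∃ g : Fin (n + 1) → ℝ, (∀ j, g j ≠ 0) ∧ ∑ j, g j • xv j = 0 := by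
  have hnli : ¬ LinearIndependent ℝ xv := by
    intro h
    have := h.fintype_card_le_finrank (R := ℝ)
    simp at this
  obtain ⟨g, hsum, i0, hi0⟩ := Fintype.not_linearIndependent_iff.mp hnli
  refine ⟨g, ?_, hsum⟩
  intro j
  by_contra hj
  -- restrict to complement of j
  have hcard : ({j}ᶜ : Finset (Fin (n + 1))).card = n := by
    simp [Finset.card_compl]
  have hli := hfs {j}ᶜ hcard
  rw [Fintype.linearIndependent_iff] at hli
  have hsum' : ∑ k : {k // k ∈ ({j}ᶜ : Finset (Fin (n+1)))}, g k.1 • xv k.1 = 0 := by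
    rw [Finset.sum_coe_sort _ (fun k => g k • xv k), ← hsum]
    apply Finset.sum_subset (Finset.subset_univ _)
    intro k _ hk
    simp only [Finset.mem_compl, Finset.mem_singleton, not_not] at hk
    rw [hk, hj, zero_smul]
  have := hli (fun k => g k.1) hsum' ⟨i0, by
    simp only [Finset.mem_compl, Finset.mem_singleton]
    rintro rfl
    exact hi0 hj⟩
  exact hi0 this

end helpers

section gram
variable {n : ℕ} (xv : Fin (n + 1) → EuclideanSpace ℝ (Fin n))
  (hunit : ∀ j, ‖xv j‖ = 1)
  (g : Fin (n + 1) → ℝ) (hg : ∀ j, g j ≠ 0) (hdep : ∑ j, g j • xv j = 0)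

include hunit hg hdep in
lemma gram_eq (hn : 1 ≤ n)
    (hle : ∀ i j : Fin (n + 1), i ≠ j → |⟪xv i, xv j⟫| ≤ 1 / (n : ℝ)) :
    ∀ i j : Fin (n + 1), i ≠ j → |⟪xv i, xv j⟫| = 1 / (n : ℝ) := by
  have hnpos : (0 : ℝ) < n := by exact_mod_cast hn
  set A := ∑ j, |g j| with hA
  have hApos : 0 < A := by
    calc (0:ℝ) < |g 0| := abs_pos.mpr (hg 0)
    _ ≤ A := Finset.single_le_sum (f := fun j => |g j|) (fun j _ => abs_nonneg _) (Finset.mem_univ 0)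
  have habs : ∀ i, |g i| ≤ ∑ j ∈ Finset.univ.erase i, |g j| * |⟪xv i, xv j⟫| := by
    intro i
    have h0 : ⟪xv i, ∑ j, g j • xv j⟫ = 0 := by rw [hdep, inner_zero_right]
    rw [inner_sum] at h0
    simp only [real_inner_smul_right] at h0
    have h2 : g i * ⟪xv i, xv i⟫ + ∑ j ∈ Finset.univ.erase i, g j * ⟪xv i, xv j⟫ = 0 := by
      rw [Finset.add_sum_erase Finset.univ (fun j => g j * ⟪xv i, xv j⟫) (Finset.mem_univ i)]
      exact h0
    have hii : ⟪xv i, xv i⟫ = 1 := by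
      rw [real_inner_self_eq_norm_sq, hunit, one_pow]
    rw [hii, mul_one] at h2
    have : g i = -∑ j ∈ Finset.univ.erase i, g j * ⟪xv i, xv j⟫ := by linarith
    calc |g i| = |∑ j ∈ Finset.univ.erase i, g j * ⟪xv i, xv j⟫| := by rw [this, abs_neg]
    _ ≤ ∑ j ∈ Finset.univ.erase i, |g j * ⟪xv i, xv j⟫| := Finset.abs_sum_le_sum_abs _ _
    _ = ∑ j ∈ Finset.univ.erase i, |g j| * |⟪xv i, xv j⟫| := by
        apply Finset.sum_congr rfl; intro j _; rw [abs_mul]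
  have hsumerase : ∀ i, ∑ j ∈ Finset.univ.erase i, |g j| = A - |g i| := by
    intro i
    rw [Finset.sum_erase_eq_sub (Finset.mem_univ i)]
  have key : ∀ i, |g i| ≤ 1 / n * (A - |g i|) := by
    intro i
    calc |g i| ≤ ∑ j ∈ Finset.univ.erase i, |g j| * |⟪xv i, xv j⟫| := habs i
    _ ≤ ∑ j ∈ Finset.univ.erase i, |g j| * (1 / n) := by
        apply Finset.sum_le_sum
        intro j hj
        exact mul_le_mul_of_nonneg_left
          (hle i j (fun h => (Finset.mem_erase.mp hj).1 h.symm)) (abs_nonneg _)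
    _ = 1 / n * (A - |g i|) := by rw [← Finset.sum_mul, hsumerase i, mul_comm]
  have hub : ∀ i, |g i| ≤ A / (n + 1) := by
    intro i
    rw [le_div_iff₀ (by positivity : (0:ℝ) < (n:ℝ) + 1)]
    have h := key i
    rw [one_div, inv_mul_eq_div, le_div_iff₀ hnpos] at h
    linarith
  have heq : ∀ i, |g i| = A / (n + 1) := by
    by_contra hc
    push_neg at hc
    obtain ⟨i, hi⟩ := hc
    have hlt : |g i| < A / (n + 1) := lt_of_le_of_ne (hub i) hi
    have : A < ∑ _j : Fin (n + 1), A / ((n : ℝ) + 1) := by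
      rw [hA]
      exact Finset.sum_lt_sum (fun j _ => hub j) ⟨i, Finset.mem_univ i, hlt⟩
    rw [Finset.sum_const, Finset.card_univ, Fintype.card_fin, nsmul_eq_mul] at this
    rw [Nat.cast_add, Nat.cast_one, mul_div_cancel₀] at this
    · exact lt_irrefl A this
    · positivity
  -- termwise equality
  intro i j hij
  have hterm : ∀ k ∈ Finset.univ.erase i, |g k| * |⟪xv i, xv k⟫| = |g k| * (1 / n) := by
    by_contra hc
    push_neg at hc
    obtain ⟨k, hk, hkne⟩ := hc
    have hklt : |g k| * |⟪xv i, xv k⟫| < |g k| * (1 / n) := by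
      refine lt_of_le_of_ne ?_ hkne
      exact mul_le_mul_of_nonneg_left
        (hle i k (fun h => (Finset.mem_erase.mp hk).1 h.symm)) (abs_nonneg _)
    have hlt : ∑ k ∈ Finset.univ.erase i, |g k| * |⟪xv i, xv k⟫|
        < ∑ k ∈ Finset.univ.erase i, |g k| * (1 / n) := by
      apply Finset.sum_lt_sum
      · intro m hm
        exact mul_le_mul_of_nonneg_left
          (hle i m (fun h => (Finset.mem_erase.mp hm).1 h.symm)) (abs_nonneg _)
      · exact ⟨k, hk, hklt⟩
    have hrhs : ∑ k ∈ Finset.univ.erase i, |g k| * (1 / n) = 1 / n * (A - |g i|) := by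
      rw [← Finset.sum_mul, hsumerase i, mul_comm]
    have hAi : (1:ℝ) / n * (A - |g i|) = A / (n + 1) := by
      rw [heq i]
      field_simp
      ring
    have := lt_of_le_of_lt (habs i) hlt
    rw [hrhs, hAi, heq i] at this
    exact lt_irrefl _ this
  have hj : j ∈ Finset.univ.erase i := Finset.mem_erase.mpr ⟨fun h => hij h.symm, Finset.mem_univ j⟩
  have := hterm j hj
  exact mul_left_cancel₀ (abs_ne_zero.mpr (hg j)) this
end gram

section lemA
variable {n : ℕ} (xv : Fin (n + 1) → EuclideanSpace ℝ (Fin n))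
  (hunit : ∀ j, ‖xv j‖ = 1)

include hunit in
set_option maxHeartbeats 1000000 in
lemma lemA (hn : 1 ≤ n) {l : ℝ} (hl : 0 < l)
    (hinj : Set.InjOn
      (fun x : EuclideanSpace ℝ (Fin n) => fun j : Fin (n + 1) => satur l ⟪x, xv j⟫)
      (Metric.closedBall 0 1))
    (i j : Fin (n + 1)) (hij : i ≠ j) :
    Real.sqrt ((1 + |⟪xv i, xv j⟫|) / 2) ≤ l := by
  by_contra hcon
  push_neg at hcon
  have hc : (⟪xv i, xv j⟫ : ℝ) = ⟪xv i, xv j⟫ := rfl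
  set c : ℝ := ⟪xv i, xv j⟫ with hcdef
  set μ : ℝ := Real.sqrt ((1 + |c|) / 2) with hμ
  have hμsq : μ ^ 2 = (1 + |c|) / 2 := Real.sq_sqrt (by positivity)
  have hμpos : 0 < μ := by
    rw [hμ]; apply Real.sqrt_pos.mpr; positivity
  obtain ⟨ε, hεor, hεc⟩ : ∃ ε : ℝ, (ε = 1 ∨ ε = -1) ∧ ε * c = |c| := by
    rcases le_or_gt 0 c with h | h
    · exact ⟨1, Or.inl rfl, by rw [one_mul, abs_of_nonneg h]⟩
    · exact ⟨-1, Or.inr rfl, by rw [neg_one_mul, abs_of_neg h]⟩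
  have hε2 : ε * ε = 1 := by rcases hεor with rfl | rfl <;> norm_num
  -- choose z orthogonal to the other vectors
  obtain ⟨z, hz0, hzperp⟩ :
      ∃ z : EuclideanSpace ℝ (Fin n), z ≠ 0 ∧ ∀ k, k ≠ i → k ≠ j → ⟪z, xv k⟫ = 0 := by
    classical
    set t : Finset (Fin (n + 1)) := {i, j}ᶜ with ht
    set K : Submodule ℝ (EuclideanSpace ℝ (Fin n)) :=
      Submodule.span ℝ (↑(t.image xv) : Set (EuclideanSpace ℝ (Fin n))) with hK
    have hKrank : Module.finrank ℝ K ≤ n - 1 := by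
      calc Module.finrank ℝ K ≤ (t.image xv).card := finrank_span_finset_le_card _
      _ ≤ t.card := Finset.card_image_le
      _ = n - 1 := by
          rw [ht, Finset.card_compl, Finset.card_pair hij]
          simp only [Fintype.card_fin]
          omega
    have hKne : Kᗮ ≠ ⊥ := by
      intro hbot
      rw [Submodule.orthogonal_eq_bot_iff] at hbot
      have h5 : Module.finrank ℝ K = n := by
        rw [hbot, finrank_top, finrank_euclideanSpace, Fintype.card_fin]
      omega
    obtain ⟨z, hzK, hz0⟩ := Submodule.ne_bot_iff _ |>.mp hKne
    refine ⟨z, hz0, fun k hki hkj => ?_⟩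
    have hxk : xv k ∈ K := by
      apply Submodule.subset_span
      simp only [Finset.coe_image, Set.mem_image, Finset.mem_coe]
      exact ⟨k, by simp [ht, hki, hkj], rfl⟩
    rw [real_inner_comm]
    exact (Submodule.mem_orthogonal K z).mp hzK (xv k) hxk
  -- the base point
  obtain ⟨v, hv1, hvi, hvj⟩ : ∃ v : EuclideanSpace ℝ (Fin n),
      ‖v‖ < 1 ∧ l < ⟪v, xv i⟫ ∧ l < ε * ⟪v, xv j⟫ := by
    set u : EuclideanSpace ℝ (Fin n) := xv i + ε • xv j with hu
    have hui : ⟪u, xv i⟫ = 2 * μ ^ 2 := by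
      rw [hu, inner_add_left, real_inner_smul_left, real_inner_self_eq_norm_sq, hunit i,
        real_inner_comm, ← hcdef, hμsq]
      linarith [hεc]
    have huj : ε * ⟪u, xv j⟫ = 2 * μ ^ 2 := by
      rw [hu, inner_add_left, real_inner_smul_left, real_inner_self_eq_norm_sq, hunit j,
        ← hcdef, hμsq]
      nlinarith [hεc, hε2]
    have hunorm : ‖u‖ = 2 * μ := by
      have h1 : ‖u‖ ^ 2 = (2 * μ) ^ 2 := by
        rw [hu, norm_add_sq_real, norm_smul, real_inner_smul_right, hunit i, hunit j,
          Real.norm_eq_abs]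
        have habs : |ε| = 1 := by rcases hεor with rfl | rfl <;> norm_num
        rw [habs, ← hcdef]
        nlinarith [hεc, hμsq]
      have h2 : 0 ≤ ‖u‖ := norm_nonneg u
      nlinarith
    set θ : ℝ := (l / μ + 1) / 2 with hθ
    have hlμ : l / μ < 1 := (div_lt_one hμpos).mpr hcon
    have hθpos : 0 < θ := by positivity
    have hθlt : θ < 1 := by rw [hθ]; linarith
    have hθμ : l < θ * μ := by
      have h6 : θ * μ = (l + μ) / 2 := by rw [hθ]; field_simp
      rw [h6]; linarith [hcon]
    refine ⟨(θ / (2 * μ)) • u, ?_, ?_, ?_⟩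
    · rw [norm_smul, hunorm, Real.norm_eq_abs, abs_of_pos (by positivity)]
      rw [show θ / (2 * μ) * (2 * μ) = θ by field_simp]
      exact hθlt
    · rw [real_inner_smul_left, hui]
      rw [show θ / (2 * μ) * (2 * μ ^ 2) = θ * μ by field_simp]
      exact hθμ
    · rw [real_inner_smul_left,
        show ε * (θ / (2 * μ) * ⟪u, xv j⟫) = θ / (2 * μ) * (ε * ⟪u, xv j⟫) by ring, huj]
      rw [show θ / (2 * μ) * (2 * μ ^ 2) = θ * μ by field_simp]
      exact hθμ
  -- choose the perturbation size
  obtain ⟨t, htpos, htz, htzi, htzj⟩ : ∃ t : ℝ, 0 < t ∧ t * ‖z‖ ≤ 1 - ‖v‖ ∧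
      t * |⟪z, xv i⟫| ≤ ⟪v, xv i⟫ - l ∧ t * |⟪z, xv j⟫| ≤ ε * ⟪v, xv j⟫ - l := by
    set a : ℝ := 1 - ‖v‖ with ha
    set b : ℝ := ⟪v, xv i⟫ - l with hb
    set b' : ℝ := ε * ⟪v, xv j⟫ - l with hb'
    have hapos : 0 < a := by rw [ha]; linarith
    have hbpos : 0 < b := by rw [hb]; linarith
    have hb'pos : 0 < b' := by rw [hb']; linarith
    refine ⟨min (a / (‖z‖ + 1)) (min (b / (|⟪z, xv i⟫| + 1)) (b' / (|⟪z, xv j⟫| + 1))),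
      lt_min (by positivity) (lt_min (by positivity) (by positivity)), ?_, ?_, ?_⟩
    · have h1 : min (a / (‖z‖ + 1)) (min (b / (|⟪z, xv i⟫| + 1)) (b' / (|⟪z, xv j⟫| + 1)))
          ≤ a / (‖z‖ + 1) := min_le_left _ _
      have h2 : (0:ℝ) ≤ ‖z‖ := norm_nonneg z
      calc _ ≤ a / (‖z‖ + 1) * ‖z‖ := mul_le_mul_of_nonneg_right h1 h2
      _ ≤ a := by rw [div_mul_eq_mul_div, div_le_iff₀ (by linarith)]; nlinarith
    · have h1 : min (a / (‖z‖ + 1)) (min (b / (|⟪z, xv i⟫| + 1)) (b' / (|⟪z, xv j⟫| + 1)))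
          ≤ b / (|⟪z, xv i⟫| + 1) := le_trans (min_le_right _ _) (min_le_left _ _)
      have h2 : (0:ℝ) ≤ |⟪z, xv i⟫| := abs_nonneg _
      calc _ ≤ b / (|⟪z, xv i⟫| + 1) * |⟪z, xv i⟫| := mul_le_mul_of_nonneg_right h1 h2
      _ ≤ b := by rw [div_mul_eq_mul_div, div_le_iff₀ (by linarith)]; nlinarith
    · have h1 : min (a / (‖z‖ + 1)) (min (b / (|⟪z, xv i⟫| + 1)) (b' / (|⟪z, xv j⟫| + 1)))
          ≤ b' / (|⟪z, xv j⟫| + 1) := le_trans (min_le_right _ _) (min_le_right _ _)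
      have h2 : (0:ℝ) ≤ |⟪z, xv j⟫| := abs_nonneg _
      calc _ ≤ b' / (|⟪z, xv j⟫| + 1) * |⟪z, xv j⟫| := mul_le_mul_of_nonneg_right h1 h2
      _ ≤ b' := by rw [div_mul_eq_mul_div, div_le_iff₀ (by linarith)]; nlinarith
  -- the two points
  have hxball : v + t • z ∈ Metric.closedBall (0 : EuclideanSpace ℝ (Fin n)) 1 := by
    rw [Metric.mem_closedBall, dist_zero_right]
    calc ‖v + t • z‖ ≤ ‖v‖ + ‖t • z‖ := norm_add_le _ _
    _ = ‖v‖ + t * ‖z‖ := by rw [norm_smul, Real.norm_eq_abs, abs_of_pos htpos]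
    _ ≤ 1 := by linarith
  have hyball : v - t • z ∈ Metric.closedBall (0 : EuclideanSpace ℝ (Fin n)) 1 := by
    rw [Metric.mem_closedBall, dist_zero_right]
    calc ‖v - t • z‖ ≤ ‖v‖ + ‖t • z‖ := norm_sub_le _ _
    _ = ‖v‖ + t * ‖z‖ := by rw [norm_smul, Real.norm_eq_abs, abs_of_pos htpos]
    _ ≤ 1 := by linarith
  have hmaps : (fun k => satur l ⟪v + t • z, xv k⟫) = (fun k => satur l ⟪v - t • z, xv k⟫) := by
    funext k
    have hxk : ⟪v + t • z, xv k⟫ = ⟪v, xv k⟫ + t * ⟪z, xv k⟫ := by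
      rw [inner_add_left, real_inner_smul_left]
    have hyk : ⟪v - t • z, xv k⟫ = ⟪v, xv k⟫ - t * ⟪z, xv k⟫ := by
      rw [inner_sub_left, real_inner_smul_left]
    by_cases hki : k = i
    · subst hki
      have h1 : l ≤ ⟪v + t • z, xv k⟫ := by
        rw [hxk]
        nlinarith [neg_abs_le (⟪z, xv k⟫ : ℝ), htzi, htpos.le, hvi]
      have h2 : l ≤ ⟪v - t • z, xv k⟫ := by
        rw [hyk]
        nlinarith [le_abs_self (⟪z, xv k⟫ : ℝ), htzi, htpos.le, hvi]
      rw [satur_of_le' hl.le h1, satur_of_le' hl.le h2]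
    by_cases hkj : k = j
    · subst hkj
      have h1 : l ≤ ε * ⟪v + t • z, xv k⟫ := by
        rw [hxk, mul_add]
        have habs : -(t * |(⟪z, xv k⟫ : ℝ)|) ≤ ε * (t * ⟪z, xv k⟫) := by
          rcases hεor with rfl | rfl
          · rw [one_mul]; nlinarith [neg_abs_le (⟪z, xv k⟫ : ℝ), htpos.le]
          · rw [neg_one_mul]; nlinarith [le_abs_self (⟪z, xv k⟫ : ℝ), htpos.le]
        nlinarith [htzj, hvj]
      have h2 : l ≤ ε * ⟪v - t • z, xv k⟫ := by
        rw [hyk, mul_sub]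
        have habs : ε * (t * ⟪z, xv k⟫) ≤ t * |(⟪z, xv k⟫ : ℝ)| := by
          rcases hεor with rfl | rfl
          · rw [one_mul]; nlinarith [le_abs_self (⟪z, xv k⟫ : ℝ), htpos.le]
          · rw [neg_one_mul]; nlinarith [neg_abs_le (⟪z, xv k⟫ : ℝ), htpos.le]
        nlinarith [htzj, hvj]
      exact satur_eq_of_sign hl.le hεor h1 h2
    · have hzk : (⟪z, xv k⟫ : ℝ) = 0 := hzperp k hki hkj
      rw [hxk, hyk, hzk]
      ring_nf
  have heq1 : v + t • z = v - t • z := hinj hxball hyball hmaps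
  rw [sub_eq_add_neg] at heq1
  have heq2 : t • z = -(t • z) := add_left_cancel heq1
  have h3 : t • z + t • z = 0 := by
    nth_rewrite 2 [heq2]
    simp
  have h4 : (2 : ℝ) • (t • z) = 0 := by rw [two_smul]; exact h3
  have h5 : t • z = 0 := (smul_eq_zero.mp h4).resolve_left two_ne_zero
  exact hz0 ((smul_eq_zero.mp h5).resolve_left (ne_of_gt htpos))
end lemA

section lemB
variable {n : ℕ} (xv : Fin (n + 1) → EuclideanSpace ℝ (Fin n))
  (hunit : ∀ j, ‖xv j‖ = 1)
  (hfs : ∀ s : Finset (Fin (n + 1)), s.card = n →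
      LinearIndependent ℝ (fun j : {j // j ∈ s} => xv j.1))

include hunit hfs in
lemma lemB (hn : 1 ≤ n)
    (hsmall : ∀ i j : Fin (n + 1), i ≠ j → |⟪xv i, xv j⟫| ≤ 1 / (n : ℝ))
    {l : ℝ} (hl : 0 < l) (hl2 : (1 + 1 / (n : ℝ)) / 2 < l ^ 2) :
    Set.InjOn
      (fun x : EuclideanSpace ℝ (Fin n) => fun j : Fin (n + 1) => satur l ⟪x, xv j⟫)
      (Metric.closedBall 0 1) := by
  classical
  intro x hx y hy hxy
  by_contra hne
  have hxn : ‖x‖ ≤ 1 := by rwa [Metric.mem_closedBall, dist_zero_right] at hx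
  have hz0 : x - y ≠ 0 := sub_ne_zero.mpr hne
  set T : Finset (Fin (n + 1)) := Finset.univ.filter (fun k => ⟪x - y, xv k⟫ ≠ 0) with hT
  have hTcard : 2 ≤ T.card := by
    by_contra hc
    push_neg at hc
    have hcc : n ≤ Tᶜ.card := by
      rw [Finset.card_compl, Fintype.card_fin]
      omega
    obtain ⟨s, hs_sub, hs_card⟩ := Finset.exists_subset_card_eq hcc
    apply hz0
    apply perp_zero xv hfs s hs_card
    intro k hk
    have := hs_sub hk
    rw [Finset.mem_compl, hT, Finset.mem_filter] at this
    push_neg at this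
    rw [real_inner_comm]
    exact this (Finset.mem_univ k)
  obtain ⟨i, hiT, j, hjT, hij⟩ := Finset.one_lt_card.mp (by omega : 1 < T.card)
  -- saturation signs
  have hsat : ∀ k ∈ T, ∃ e : ℝ, (e = 1 ∨ e = -1) ∧ l ≤ e * ⟪x, xv k⟫ := by
    intro k hk
    rw [hT, Finset.mem_filter] at hk
    have hkne : (⟪x, xv k⟫ : ℝ) ≠ ⟪y, xv k⟫ := by
      intro h
      apply hk.2
      rw [inner_sub_left, h, sub_self]
    have heq : satur l ⟪x, xv k⟫ = satur l ⟪y, xv k⟫ := congrFun hxy k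
    rcases satur_cases' hl heq hkne with ⟨h1, _⟩ | ⟨h1, _⟩
    · exact ⟨1, Or.inl rfl, by rwa [one_mul]⟩
    · exact ⟨-1, Or.inr rfl, by rw [neg_one_mul]; linarith⟩
  obtain ⟨ei, heior, hei⟩ := hsat i hiT
  obtain ⟨ej, hejor, hej⟩ := hsat j hjT
  -- Cauchy-Schwarz bound
  set w : EuclideanSpace ℝ (Fin n) := ei • xv i + ej • xv j with hw
  have hinner : 2 * l ≤ ⟪x, w⟫ := by
    rw [hw, inner_add_right, real_inner_smul_right, real_inner_smul_right]
    have h1 : ei * ⟪x, xv i⟫ = ei * ⟪x, xv i⟫ := rfl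
    have hc1 : l ≤ ei * ⟪x, xv i⟫ := by
      rcases heior with rfl | rfl
      · rwa [one_mul] at hei ⊢
      · rw [neg_one_mul] at hei ⊢; linarith
    have hc2 : l ≤ ej * ⟪x, xv j⟫ := by
      rcases hejor with rfl | rfl
      · rwa [one_mul] at hej ⊢
      · rw [neg_one_mul] at hej ⊢; linarith
    linarith
  have hwnorm : ‖w‖ ^ 2 ≤ 2 + 2 / n := by
    rw [hw, norm_add_sq_real, norm_smul, norm_smul, real_inner_smul_left, real_inner_smul_right,
      hunit i, hunit j, Real.norm_eq_abs, Real.norm_eq_abs]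
    have habsi : |ei| = 1 := by rcases heior with rfl | rfl <;> norm_num
    have habsj : |ej| = 1 := by rcases hejor with rfl | rfl <;> norm_num
    rw [habsi, habsj]
    have hij2 : |⟪xv i, xv j⟫| ≤ 1 / (n : ℝ) := hsmall i j hij
    have h1 : ei * (ej * ⟪xv i, xv j⟫) ≤ 1 / n := by
      have : ei * ej = 1 ∨ ei * ej = -1 := by
        rcases heior with rfl | rfl <;> rcases hejor with rfl | rfl <;> norm_num
      rcases this with h | h
      · rw [← mul_assoc, h, one_mul]
        exact le_trans (le_abs_self _) hij2
      · rw [← mul_assoc, h, neg_one_mul]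
        exact le_trans (neg_le_abs _) hij2
    calc ((1:ℝ) * 1) ^ 2 + 2 * (ei * (ej * ⟪xv i, xv j⟫)) + (1 * 1) ^ 2
        = 2 + 2 * (ei * (ej * ⟪xv i, xv j⟫)) := by ring
    _ ≤ 2 + 2 * (1 / n) := by linarith
    _ = 2 + 2 / n := by ring
  have hcs : (⟪x, w⟫ : ℝ) ≤ ‖w‖ := by
    calc (⟪x, w⟫ : ℝ) ≤ ‖x‖ * ‖w‖ := real_inner_le_norm x w
    _ ≤ 1 * ‖w‖ := mul_le_mul_of_nonneg_right hxn (norm_nonneg w)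
    _ = ‖w‖ := one_mul _
  have hnn : (0:ℝ) < n := by exact_mod_cast hn
  have h4 : (2 * l) * (2 * l) ≤ ‖w‖ * ‖w‖ :=
    mul_self_le_mul_self (by linarith) (le_trans hinner hcs)
  rw [pow_two] at hwnorm
  rw [pow_two] at hl2
  have h6 : 4 * (l * l) ≤ 2 + 2 / (n : ℝ) := by
    calc 4 * (l * l) = 2 * l * (2 * l) := by ring
    _ ≤ ‖w‖ * ‖w‖ := h4
    _ ≤ 2 + 2 / (n : ℝ) := hwnorm
  have h8 : (2:ℝ) / (n:ℝ) = 2 * (1 / (n:ℝ)) := by ring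
  rw [h8] at h6
  linarith [h6, hl2]
end lemB


theorem critical_level_lower_bound_and_equiangular_characterization
    {n : ℕ} (xv : Fin (n + 1) → EuclideanSpace ℝ (Fin n))
    (hunit : ∀ j, ‖xv j‖ = 1)
    (hfs : ∀ s : Finset (Fin (n + 1)), s.card = n →
      LinearIndependent ℝ (fun j : {j // j ∈ s} => xv j.1))
    (lamc : ℝ)
    (hlamc : lamc = sInf {l : ℝ | 0 < l ∧ Set.InjOn
      (fun x : EuclideanSpace ℝ (Fin n) => fun j : Fin (n + 1) => satur l ⟪x, xv j⟫)
      (Metric.closedBall 0 1)}) :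
    Real.sqrt ((1 + 1 / (n : ℝ)) / 2) ≤ lamc ∧
      (lamc = Real.sqrt ((1 + 1 / (n : ℝ)) / 2) ↔
        ∀ i j : Fin (n + 1), i ≠ j → |⟪xv i, xv j⟫| = 1 / (n : ℝ)) := by
  classical
  rcases Nat.eq_zero_or_pos n with hn0 | hn
  · exfalso
    have h0 : xv ⟨0, by omega⟩ = 0 := by
      subst hn0
      ext i
      exact absurd i.isLt (by omega)
    have := hunit ⟨0, by omega⟩
    rw [h0, norm_zero] at this
    norm_num at this
  set S : Set ℝ := {l : ℝ | 0 < l ∧ Set.InjOn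
      (fun x : EuclideanSpace ℝ (Fin n) => fun j : Fin (n + 1) => satur l ⟪x, xv j⟫)
      (Metric.closedBall 0 1)} with hS
  -- 2 ∈ S
  have hS2 : (2 : ℝ) ∈ S := by
    refine ⟨by norm_num, ?_⟩
    intro x hx y hy hxy
    have hxn : ‖x‖ ≤ 1 := by rwa [Metric.mem_closedBall, dist_zero_right] at hx
    have hyn : ‖y‖ ≤ 1 := by rwa [Metric.mem_closedBall, dist_zero_right] at hy
    have hin : ∀ k, (⟪x, xv k⟫ : ℝ) = ⟪y, xv k⟫ := by
      intro k
      have h1 : |(⟪x, xv k⟫ : ℝ)| ≤ 2 := by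
        calc |(⟪x, xv k⟫ : ℝ)| ≤ ‖x‖ * ‖xv k‖ := abs_real_inner_le_norm x (xv k)
        _ ≤ 1 * 1 := mul_le_mul hxn (le_of_eq (hunit k)) (norm_nonneg _) (by norm_num)
        _ ≤ 2 := by norm_num
      have h2 : |(⟪y, xv k⟫ : ℝ)| ≤ 2 := by
        calc |(⟪y, xv k⟫ : ℝ)| ≤ ‖y‖ * ‖xv k‖ := abs_real_inner_le_norm y (xv k)
        _ ≤ 1 * 1 := mul_le_mul hyn (le_of_eq (hunit k)) (norm_nonneg _) (by norm_num)
        _ ≤ 2 := by norm_num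
      have := congrFun hxy k
      simp only at this
      rwa [satur_of_abs_le' h1, satur_of_abs_le' h2] at this
    have hsub : x - y = 0 := by
      apply perp_zero xv hfs ({(0 : Fin (n+1))}ᶜ) (by
        rw [Finset.card_compl, Finset.card_singleton, Fintype.card_fin]
        omega)
      intro k _
      rw [inner_sub_right, real_inner_comm x (xv k), real_inner_comm y (xv k), hin k, sub_self]
    exact sub_eq_zero.mp hsub
  have hSne : S.Nonempty := ⟨2, hS2⟩
  have hSbdd : BddBelow S := ⟨0, fun l hl => le_of_lt hl.1⟩
  -- a pair with large inner product
  have lemE : ∃ i j : Fin (n + 1), i ≠ j ∧ 1 / (n : ℝ) ≤ |⟪xv i, xv j⟫| := by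
    by_contra hcon
    push_neg at hcon
    obtain ⟨g, hg, hdep⟩ := exists_dep xv hfs
    have hle : ∀ i j : Fin (n + 1), i ≠ j → |⟪xv i, xv j⟫| ≤ 1 / (n : ℝ) :=
      fun i j hij => (hcon i j hij).le
    have hall := gram_eq xv hunit g hg hdep hn hle
    have hne01 : (⟨0, by omega⟩ : Fin (n + 1)) ≠ (⟨1, by omega⟩ : Fin (n + 1)) := by
      simp [Fin.ext_iff]
    have h1 := hall _ _ hne01
    have h2 := hcon _ _ hne01
    linarith
  -- lower bound for every element of S
  have hlow : ∀ l ∈ S, Real.sqrt ((1 + 1 / (n : ℝ)) / 2) ≤ l := by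
    intro l hl
    obtain ⟨i, j, hij, hije⟩ := lemE
    have h1 := lemA xv hunit hn hl.1 hl.2 i j hij
    refine le_trans ?_ h1
    apply Real.sqrt_le_sqrt
    linarith
  have hfirst : Real.sqrt ((1 + 1 / (n : ℝ)) / 2) ≤ lamc := by
    rw [hlamc]
    exact le_csInf hSne hlow
  refine ⟨hfirst, ?_, ?_⟩
  · -- equality implies equiangular
    intro he i j hij
    have hsmall : ∀ i' j' : Fin (n + 1), i' ≠ j' → |⟪xv i', xv j'⟫| ≤ 1 / (n : ℝ) := by
      intro i' j' hij'
      by_contra hgt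
      push_neg at hgt
      have hstep : ∀ l ∈ S, Real.sqrt ((1 + |⟪xv i', xv j'⟫|) / 2) ≤ l :=
        fun l hl => lemA xv hunit hn hl.1 hl.2 i' j' hij'
      have h2 : Real.sqrt ((1 + |⟪xv i', xv j'⟫|) / 2) ≤ lamc := by
        rw [hlamc]
        exact le_csInf hSne hstep
      have h3 : Real.sqrt ((1 + 1 / (n : ℝ)) / 2) < Real.sqrt ((1 + |⟪xv i', xv j'⟫|) / 2) := by
        apply Real.sqrt_lt_sqrt (by positivity)
        linarith
      rw [← he] at h3
      linarith
    obtain ⟨g, hg, hdep⟩ := exists_dep xv hfs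
    exact gram_eq xv hunit g hg hdep hn hsmall i j hij
  · -- equiangular implies equality
    intro heq
    refine le_antisymm ?_ hfirst
    rw [hlamc]
    have hsmall : ∀ i j : Fin (n + 1), i ≠ j → |⟪xv i, xv j⟫| ≤ 1 / (n : ℝ) :=
      fun i j h => (heq i j h).le
    apply le_of_forall_pos_le_add
    intro ε hε
    have hμnn : (0:ℝ) ≤ Real.sqrt ((1 + 1 / (n : ℝ)) / 2) := Real.sqrt_nonneg _
    have hsq : (Real.sqrt ((1 + 1 / (n : ℝ)) / 2)) ^ 2 = (1 + 1 / (n : ℝ)) / 2 :=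
      Real.sq_sqrt (by positivity)
    have hmem : Real.sqrt ((1 + 1 / (n : ℝ)) / 2) + ε ∈ S := by
      refine ⟨by linarith, ?_⟩
      apply lemB xv hunit hfs hn hsmall (by linarith)
      nlinarith [hμnn, hε, hsq]
    exact csInf_le hSbdd hmem
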